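/- Let f_1, …, f_m : ℝⁿ → ℝ ∪ {+∞} (m ≥ 2) be lower semicontinuous functions, each with unbounded domain and with dom(max{f_1,…,f_m}) unbounded, satisfying the qualification condition: whenever u_1 + … + u_m = 0 with u_i ∈ ∂^∞f_i(∞) for each i, one has u_1 = … = u_m = 0. Then ∂(max{f_1, …, f_m})(∞) ⊆ ⋃ {λ_1∘∂f_1(∞) + … + λ_m∘∂f_m(∞) : λ ∈ ℝ^m, λ_i ≥ 0, λ_1 + … + λ_m = 1} and ∂^∞(max{f_1, …, f_m})(∞) ⊆ ∂^∞f_1(∞) + … + ∂^∞f_m(∞). -/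

import Mathlib

open Filter Topology Set Pointwise RealInnerProductSpace

noncomputable section

variable {E : Type*} [NormedAddCommGroup E] [InnerProductSpace ℝ E]

/-- The Fréchet (regular) normal cone to `Ω` at `x`:
`{v | limsup_{y→x, y∈Ω} ⟪v, y-x⟫/‖y-x‖ ≤ 0}`, empty if `x ∉ Ω`. -/
def FrechetNormalCone (Ω : Set E) (x : E) : Set E :=
  {v | x ∈ Ω ∧ ∀ ε > (0:ℝ), ∀ᶠ y in 𝓝[Ω] x, ⟪v, y - x⟫ ≤ ε * ‖y - x‖}

/-- The limiting (Mordukhovich) normal cone to `Ω` at `x`. -/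
def LimitingNormalCone (Ω : Set E) (x : E) : Set E :=
  {v | ∃ xs vs : ℕ → E, (∀ k, vs k ∈ FrechetNormalCone Ω (xs k)) ∧
    Tendsto xs atTop (𝓝 x) ∧ Tendsto vs atTop (𝓝 v)}

/-- The normal cone to an unbounded set `Ω` at infinity. -/
def NormalConeAtInfty (Ω : Set E) : Set E :=
  {v | ∃ xs vs : ℕ → E, (∀ k, vs k ∈ FrechetNormalCone Ω (xs k)) ∧
    Tendsto (fun k => ‖xs k‖) atTop atTop ∧ Tendsto vs atTop (𝓝 v)}

/-- The epigraph of `f : E → ℝ ∪ {+∞}` as a subset of the (ℓ²-)product `E × ℝ`. -/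
def epiSet (f : E → EReal) : Set (WithLp 2 (E × ℝ)) :=
  {p | f (WithLp.equiv 2 (E × ℝ) p).1 ≤ ((WithLp.equiv 2 (E × ℝ) p).2 : EReal)}

/-- The point `(x, t)` of the (ℓ²-)product `E × ℝ`. -/
def mkP (x : E) (t : ℝ) : WithLp 2 (E × ℝ) := (WithLp.equiv 2 (E × ℝ)).symm (x, t)

/-- `𝒩(f)`: limits of limiting normals to `epi f` at points `(x_k, f(x_k))` with `‖x_k‖ → ∞`. -/
def NclAtInfty (f : E → EReal) : Set (E × ℝ) :=
  {q | ∃ (xs : ℕ → E) (ws : ℕ → WithLp 2 (E × ℝ)),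
    (∀ k, f (xs k) ≠ ⊤) ∧
    Tendsto (fun k => ‖xs k‖) atTop atTop ∧
    (∀ k, ws k ∈ LimitingNormalCone (epiSet f) (mkP (xs k) (f (xs k)).toReal)) ∧
    Tendsto (fun k => WithLp.equiv 2 (E × ℝ) (ws k)) atTop (𝓝 q)}

/-- The limiting subdifferential of `f` at infinity: `∂f(∞) = {u | (u,-1) ∈ 𝒩(f)}`. -/
def subInfty (f : E → EReal) : Set E := {u | (u, (-1 : ℝ)) ∈ NclAtInfty f}

/-- The singular subdifferential of `f` at infinity: `∂^∞f(∞) = {u | (u,0) ∈ 𝒩(f)}`. -/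
def singSubInfty (f : E → EReal) : Set E := {u | (u, (0 : ℝ)) ∈ NclAtInfty f}

/-- The singular subdifferential of `f` at a point `x ∈ dom f`:
`∂^∞f(x) = {v | (v,0) ∈ N((x,f(x)); epi f)}`, empty if `x ∉ dom f`. -/
def singSub (f : E → EReal) (x : E) : Set E :=
  {v | f x ≠ ⊤ ∧ mkP v 0 ∈ LimitingNormalCone (epiSet f) (mkP x (f x).toReal)}

/-- `λ∘∂f(∞)`: equals `λ • ∂f(∞)` for `λ ≠ 0` and `∂^∞f(∞)` for `λ = 0`. -/
def lamCirc (f : E → EReal) (lam : ℝ) : Set E :=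
  if lam = 0 then singSubInfty f else lam • subInfty f

/-- `f` is Lipschitz at infinity. -/
def LipschitzAtInfty (f : E → ℝ) : Prop :=
  ∃ L > (0:ℝ), ∃ R > (0:ℝ), ∀ x x' : E, R < ‖x‖ → R < ‖x'‖ → |f x - f x'| ≤ L * ‖x - x'‖

end

/-!
The epigraph of `max fᵢ` is the intersection of the epigraphs. A Fréchet normal to an intersection
of closed sets in finite dimension is, up to `ε`, a sum of Fréchet normals to the sets at nearby
points (fuzzy intersection rule): maximise `⟪v, y₀ - q⟫ - K‖y₀ - q‖² - c ∑ᵢ ‖yᵢ - y₀‖²` over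
`yᵢ ∈ Ωᵢ` near `q`; for large `c` a maximiser is nearly diagonal, and its first-order conditions
give the normals `2c (y₀ - yᵢ)`, which sum to `v - 2K (y₀ - q)`.

Applied along a sequence realising an element of `𝒩(max fᵢ)`, this yields families of normals to
the `epi fᵢ`, at points going to infinity, whose sums converge. If the families stay bounded along
a subsequence, their limits split the given normal; otherwise their normalisations converge to a
nonzero family of horizon normals with sum zero, whose last coordinates (all `≤ 0`) must vanish,
contradicting the qualification condition. The multipliers `λᵢ` are minus the last coordinates.
-/

section FrechetNormalCone

variable {Y : Type*} [NormedAddCommGroup Y] [InnerProductSpace ℝ Y] {Ω : Set Y} {x v : Y}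

theorem smul_mem_frechetNormalCone {c : ℝ} (hc : 0 ≤ c) (hv : v ∈ FrechetNormalCone Ω x) :
    c • v ∈ FrechetNormalCone Ω x := by
  refine ⟨hv.1, fun ε hε => ?_⟩
  filter_upwards [hv.2 (ε / (c + 1)) (by positivity)] with y hy
  have hcε : c * (ε / (c + 1)) ≤ ε := by
    rw [mul_div_assoc', div_le_iff₀ (by positivity)]; nlinarith
  rw [real_inner_smul_left]
  calc c * ⟪v, y - x⟫ ≤ c * (ε / (c + 1) * ‖y - x‖) := mul_le_mul_of_nonneg_left hy hc
    _ ≤ ε * ‖y - x‖ := by rw [← mul_assoc]; gcongr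

theorem mem_frechetNormalCone_of_inner_le_mul_norm_sq (hx : x ∈ Ω) {C ρ : ℝ} (hρ : 0 < ρ)
    (h : ∀ y ∈ Ω, ‖y - x‖ < ρ → ⟪v, y - x⟫ ≤ C * ‖y - x‖ ^ 2) : v ∈ FrechetNormalCone Ω x := by
  refine ⟨hx, fun ε hε => ?_⟩
  have hball := Metric.ball_mem_nhds x (lt_min hρ (by positivity : 0 < ε / (|C| + 1)))
  filter_upwards [nhdsWithin_le_nhds hball, self_mem_nhdsWithin] with y hy hyΩ
  rw [Metric.mem_ball, dist_eq_norm, lt_min_iff, lt_div_iff₀ (by positivity)] at hy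
  calc ⟪v, y - x⟫ ≤ C * ‖y - x‖ ^ 2 := h y hyΩ hy.1
    _ ≤ ‖y - x‖ * (|C| + 1) * ‖y - x‖ := by nlinarith [le_abs_self C, norm_nonneg (y - x)]
    _ ≤ ε * ‖y - x‖ := by gcongr; exact hy.2.le

theorem mem_frechetNormalCone_of_add_mem {a : Y} (hx : x ∈ Ω) (hΩ : ∀ y ∈ Ω, y + a ∈ Ω)
    (hv : v ∈ FrechetNormalCone Ω (x + a)) : v ∈ FrechetNormalCone Ω x := by
  refine ⟨hx, fun ε hε => ?_⟩
  have htrans : Tendsto (· + a) (𝓝[Ω] x) (𝓝[Ω] (x + a)) :=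
    (continuous_add_const a).continuousWithinAt.tendsto_nhdsWithin hΩ
  filter_upwards [htrans.eventually (hv.2 ε hε)] with y hy
  rwa [add_sub_add_right_eq_sub] at hy

theorem frechetNormalCone_subset_limitingNormalCone :
    FrechetNormalCone Ω x ⊆ LimitingNormalCone Ω x := fun v hv =>
  ⟨fun _ => x, fun _ => v, fun _ => hv, tendsto_const_nhds, tendsto_const_nhds⟩

theorem eq_zero_of_inner_le_mul_norm_sq {a : Y} {C ρ : ℝ} (hρ : 0 < ρ)
    (h : ∀ d : Y, ‖d‖ < ρ → ⟪a, d⟫ ≤ C * ‖d‖ ^ 2) : a = 0 := by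
  have hsmall : Tendsto (fun s : ℝ => ‖s • a‖) (𝓝[>] 0) (𝓝 0) := by
    have hcont : Continuous fun s : ℝ => ‖s • a‖ := by fun_prop
    simpa using tendsto_nhdsWithin_of_tendsto_nhds (hcont.tendsto 0)
  have hlim : Tendsto (fun s : ℝ => C * s * ‖a‖ ^ 2) (𝓝[>] 0) (𝓝 0) := by
    have hcont : Continuous fun s : ℝ => C * s * ‖a‖ ^ 2 := by fun_prop
    simpa using tendsto_nhdsWithin_of_tendsto_nhds (hcont.tendsto 0)
  have hle : ∀ᶠ s : ℝ in 𝓝[>] 0, ‖a‖ ^ 2 ≤ C * s * ‖a‖ ^ 2 := by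
    filter_upwards [self_mem_nhdsWithin, hsmall.eventually (gt_mem_nhds hρ)] with s hs hsρ
    have := h (s • a) hsρ
    rw [real_inner_smul_right, real_inner_self_eq_norm_sq, norm_smul, Real.norm_of_nonneg hs.out.le]
      at this
    nlinarith [hs.out]
  simpa using ge_of_tendsto hlim hle

end FrechetNormalCone

section IntersectionRule

variable {Y : Type*} [NormedAddCommGroup Y] [InnerProductSpace ℝ Y] {ι : Type*} [Fintype ι]

def intersectionPenalty (v q : Y) (K c : ℝ) (y : Y × (ι → Y)) : ℝ :=
  ⟪v, y.1 - q⟫ - K * ‖y.1 - q‖ ^ 2 - c * ∑ i, ‖y.2 i - y.1‖ ^ 2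

def penaltyDomain (Ω : ι → Set Y) (q : Y) (r : ℝ) : Set (Y × (ι → Y)) :=
  Metric.closedBall q r ×ˢ univ.pi fun i => Ω i ∩ Metric.closedBall q r

variable {Ω : ι → Set Y} {q v y₀ : Y} {w : ι → Y} {K c r : ℝ}

theorem smul_sub_mem_frechetNormalCone_of_isMaxOn (hc : 0 ≤ c)
    (hy : (y₀, w) ∈ penaltyDomain Ω q r)
    (hmax : IsMaxOn (intersectionPenalty v q K c) (penaltyDomain Ω q r) (y₀, w))
    {i : ι} (hi : ‖w i - q‖ < r) :
    (2 * c) • (y₀ - w i) ∈ FrechetNormalCone (Ω i) (w i) := by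
  classical
  refine mem_frechetNormalCone_of_inner_le_mul_norm_sq (hy.2 i trivial).1 (sub_pos.2 hi)
    (C := c) fun z hz hzw => ?_
  have hzq : ‖z - q‖ ≤ r := by
    have := norm_sub_le_norm_sub_add_norm_sub z (w i) q
    linarith
  have hmem : (y₀, Function.update w i z) ∈ penaltyDomain Ω q r :=
    ⟨hy.1, (update_mem_pi_iff_of_mem hy.2).2 fun _ => ⟨hz, by simpa [dist_eq_norm] using hzq⟩⟩
  have hsum : ∑ j, ‖Function.update w i z j - y₀‖ ^ 2 - ∑ j, ‖w j - y₀‖ ^ 2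
      = ‖z - y₀‖ ^ 2 - ‖w i - y₀‖ ^ 2 := by
    rw [← Finset.sum_sub_distrib, Finset.sum_eq_single i (fun j _ hj => by simp [hj]) (by simp)]
    simp
  have hexp : ‖z - y₀‖ ^ 2 = ‖z - w i‖ ^ 2 + 2 * ⟪z - w i, w i - y₀⟫ + ‖w i - y₀‖ ^ 2 := by
    rw [← norm_add_sq_real, sub_add_sub_cancel]
  have hle := hmax hmem
  simp only [intersectionPenalty, mem_ofPred_eq] at hle
  have hinner : ⟪(2 * c) • (y₀ - w i), z - w i⟫ = -(2 * c) * ⟪z - w i, w i - y₀⟫ := by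
    rw [← neg_sub y₀ (w i), inner_neg_right, real_inner_smul_left, real_inner_comm]; ring
  rw [hinner]
  nlinarith

theorem sum_smul_sub_eq_of_isMaxOn (hy : (y₀, w) ∈ penaltyDomain Ω q r)
    (hmax : IsMaxOn (intersectionPenalty v q K c) (penaltyDomain Ω q r) (y₀, w))
    (h₀ : ‖y₀ - q‖ < r) :
    ∑ i, (2 * c) • (y₀ - w i) = v - (2 * K) • (y₀ - q) := by
  -- `a` is the gradient of the penalty in the centre, which is free because `y₀` is interior
  set a := v - (2 * K) • (y₀ - q) - ∑ i, (2 * c) • (y₀ - w i)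
  suffices a = 0 from (sub_eq_zero.1 this).symm
  refine eq_zero_of_inner_le_mul_norm_sq (sub_pos.2 h₀) (C := K + c * Fintype.card ι)
    fun d hd => ?_
  have hmem : (y₀ + d, w) ∈ penaltyDomain Ω q r := by
    refine ⟨?_, hy.2⟩
    have := norm_add_le (y₀ - q) d
    rw [Metric.mem_closedBall, dist_eq_norm, add_sub_right_comm]
    linarith
  have hle := hmax hmem
  simp only [intersectionPenalty, mem_ofPred_eq] at hle
  have hlin : ⟪v, y₀ + d - q⟫ = ⟪v, y₀ - q⟫ + ⟪v, d⟫ := by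
    rw [add_sub_right_comm, inner_add_right]
  have hquad : ‖y₀ + d - q‖ ^ 2 = ‖y₀ - q‖ ^ 2 + 2 * ⟪y₀ - q, d⟫ + ‖d‖ ^ 2 := by
    rw [add_sub_right_comm, norm_add_sq_real]
  have hsum : ∑ i, ‖w i - (y₀ + d)‖ ^ 2
      = ∑ i, ‖w i - y₀‖ ^ 2 - 2 * ∑ i, ⟪w i - y₀, d⟫ + Fintype.card ι * ‖d‖ ^ 2 := by
    simp only [← sub_sub, norm_sub_sq_real, Finset.sum_add_distrib, Finset.sum_sub_distrib,
      ← Finset.mul_sum, Finset.sum_const, Finset.card_univ, nsmul_eq_mul]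
  have hflip : ∑ i, ⟪y₀ - w i, d⟫ = -∑ i, ⟪w i - y₀, d⟫ := by
    rw [← Finset.sum_neg_distrib]; simp only [← inner_neg_left, neg_sub]
  have hgrad : ⟪a, d⟫ = ⟪v, d⟫ - 2 * K * ⟪y₀ - q, d⟫ - 2 * c * ∑ i, ⟪y₀ - w i, d⟫ := by
    simp only [a, inner_sub_left, real_inner_smul_left, sum_inner, Finset.mul_sum]
  rw [hgrad, hflip]
  rw [hlin, hquad, hsum] at hle
  nlinarith

theorem penalty_le_inner_of_isMaxOn (hq : ∀ i, q ∈ Ω i) (hr : 0 ≤ r) {y : Y × (ι → Y)}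
    (hmax : IsMaxOn (intersectionPenalty v q K c) (penaltyDomain Ω q r) y) :
    K * ‖y.1 - q‖ ^ 2 + c * ∑ i, ‖y.2 i - y.1‖ ^ 2 ≤ ⟪v, y.1 - q⟫ := by
  have hq' : (q, fun _ => q) ∈ penaltyDomain Ω q r :=
    ⟨Metric.mem_closedBall_self hr, fun i _ => ⟨hq i, Metric.mem_closedBall_self hr⟩⟩
  have := hmax hq'
  simp only [intersectionPenalty, mem_ofPred_eq, sub_self, inner_zero_right, norm_zero] at this
  norm_num at this
  linarith

theorem snd_eq_fst_of_tendsto_isMaxOn (hq : ∀ i, q ∈ Ω i) (hr : 0 ≤ r) (hK : 0 ≤ K)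
    {y : ℕ → Y × (ι → Y)} (hyT : ∀ k, y k ∈ penaltyDomain Ω q r)
    (hymax : ∀ k : ℕ, IsMaxOn (intersectionPenalty v q K (k + 1)) (penaltyDomain Ω q r) (y k))
    {φ : ℕ → ℕ} (hφ : Tendsto φ atTop atTop) {ŷ : Y × (ι → Y)}
    (hlim : Tendsto (y ∘ φ) atTop (𝓝 ŷ)) (i : ι) : ŷ.2 i = ŷ.1 := by
  have hsq_nonneg : ∀ y : Y × (ι → Y), 0 ≤ ∑ i, ‖y.2 i - y.1‖ ^ 2 := fun y =>
    Finset.sum_nonneg fun i _ => sq_nonneg _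
  have hsmall : ∀ k : ℕ, ∑ i, ‖(y k).2 i - (y k).1‖ ^ 2 ≤ ‖v‖ * r / ((k : ℝ) + 1) := by
    intro k
    have hyr : ‖(y k).1 - q‖ ≤ r := by simpa [dist_eq_norm] using (hyT k).1
    rw [le_div_iff₀ (by positivity)]
    nlinarith [penalty_le_inner_of_isMaxOn hq hr (hymax k), real_inner_le_norm v ((y k).1 - q),
      mul_le_mul_of_nonneg_left hyr (norm_nonneg v), hsq_nonneg (y k),
      mul_nonneg hK (sq_nonneg ‖(y k).1 - q‖)]
  have hzero : Tendsto (fun j => ‖v‖ * r / ((φ j : ℝ) + 1)) atTop (𝓝 0) :=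
    (tendsto_const_nhds.div_atTop
      (tendsto_atTop_add_const_right _ 1 tendsto_natCast_atTop_atTop)).comp hφ
  have hcont : Continuous fun y : Y × (ι → Y) => ∑ i, ‖y.2 i - y.1‖ ^ 2 := by fun_prop
  have hle := le_of_tendsto_of_tendsto' (hcont.tendsto ŷ |>.comp hlim) hzero fun j => hsmall (φ j)
  have := (Finset.sum_eq_zero_iff_of_nonneg fun i _ => sq_nonneg _).1
    (le_antisymm hle (hsq_nonneg ŷ)) i (Finset.mem_univ i)
  simpa [sub_eq_zero] using this

/-- Maximisers for the weights `c = k + 1` subconverge to a diagonal point `(ŷ, …, ŷ)`; then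
`ŷ ∈ ⋂ i, Ω i`, and `ŷ` is close to `q` because `v` is almost normal there. -/
theorem exists_frequently_isMaxOn_penalty [ProperSpace Y] (hΩ : ∀ i, IsClosed (Ω i))
    (hq : ∀ i, q ∈ Ω i) {τ : ℝ} (hτ : 0 ≤ τ) (hr : 0 < r) (hK : ‖v‖ < K * r)
    (hv : ∀ z ∈ ⋂ i, Ω i, ‖z - q‖ < r → ⟪v, z - q⟫ ≤ τ * ‖z - q‖) :
    ∃ ŷ : Y, K * ‖ŷ - q‖ ≤ τ ∧ ∃ᶠ y in 𝓝 (ŷ, fun _ => ŷ), ∃ c ≥ 0,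
      y ∈ penaltyDomain Ω q r ∧ IsMaxOn (intersectionPenalty v q K c) (penaltyDomain Ω q r) y := by
  have hT : IsCompact (penaltyDomain Ω q r) := (isCompact_closedBall q r).prod
    (isCompact_univ_pi fun i => (isCompact_closedBall q r).inter_left (hΩ i))
  have hmax : ∀ k : ℕ, ∃ y ∈ penaltyDomain Ω q r,
      IsMaxOn (intersectionPenalty v q K (k + 1)) (penaltyDomain Ω q r) y := fun k =>
    hT.exists_isMaxOn ⟨(q, fun _ => q), Metric.mem_closedBall_self hr.le,
      fun i _ => ⟨hq i, Metric.mem_closedBall_self hr.le⟩⟩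
      (by unfold intersectionPenalty; fun_prop)
  choose y hyT hymax using hmax
  have hbound := fun k => penalty_le_inner_of_isMaxOn hq hr.le (hymax k)
  obtain ⟨ŷ, hŷT, φ, hφ, hlim⟩ := hT.tendsto_subseq hyT
  have hKpos : 0 < K := pos_of_mul_pos_left ((norm_nonneg v).trans_lt hK) hr.le
  have hdiag := snd_eq_fst_of_tendsto_isMaxOn hq hr.le hKpos.le hyT hymax hφ.tendsto_atTop hlim
  have hquad : K * ‖ŷ.1 - q‖ ^ 2 ≤ ⟪v, ŷ.1 - q⟫ := by
    have hcont₁ : Continuous fun y : Y × (ι → Y) => K * ‖y.1 - q‖ ^ 2 := by fun_prop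
    have hcont₂ : Continuous fun y : Y × (ι → Y) => ⟪v, y.1 - q⟫ := by fun_prop
    refine le_of_tendsto_of_tendsto' (hcont₁.tendsto ŷ |>.comp hlim) (hcont₂.tendsto ŷ |>.comp hlim)
      fun j => ?_
    have : 0 ≤ ∑ i, ‖(y (φ j)).2 i - (y (φ j)).1‖ ^ 2 := Finset.sum_nonneg fun i _ => sq_nonneg _
    simp only [Function.comp_apply]
    nlinarith [hbound (φ j)]
  have hcancel : ∀ a, 0 ≤ a → K * ‖ŷ.1 - q‖ ^ 2 ≤ a * ‖ŷ.1 - q‖ → K * ‖ŷ.1 - q‖ ≤ a := by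
    intro a ha h
    rcases (norm_nonneg (ŷ.1 - q)).eq_or_lt with h0 | h0
    · rw [← h0, mul_zero]; exact ha
    · exact le_of_mul_le_mul_right (by nlinarith) h0
  have hnear : ‖ŷ.1 - q‖ < r := by
    have := hcancel _ (norm_nonneg v)
      (hquad.trans (by nlinarith [real_inner_le_norm v (ŷ.1 - q)]))
    exact lt_of_mul_lt_mul_left (this.trans_lt hK) hKpos.le
  have hin : ŷ.1 ∈ ⋂ i, Ω i := mem_iInter.2 fun i => hdiag i ▸ (hŷT.2 i trivial).1
  refine ⟨ŷ.1, hcancel τ hτ (hquad.trans (by nlinarith [hv _ hin hnear])), ?_⟩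
  rw [show (ŷ.1, fun _ => ŷ.1) = ŷ from Prod.ext rfl (funext fun i => (hdiag i).symm)]
  exact hlim.frequently (Frequently.of_forall fun j => ⟨_, by positivity, hyT _, hymax _⟩)

theorem exists_sum_mem_frechetNormalCone_near [ProperSpace Y] (hΩ : ∀ i, IsClosed (Ω i))
    (hv : v ∈ FrechetNormalCone (⋂ i, Ω i) q) {ε : ℝ} (hε : 0 < ε) :
    ∃ y μ : ι → Y, (∀ i, ‖y i - q‖ ≤ ε) ∧ (∀ i, μ i ∈ FrechetNormalCone (Ω i) (y i)) ∧
      ‖∑ i, μ i - v‖ ≤ ε := by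
  obtain ⟨r, hr, hball⟩ := Metric.eventually_nhds_iff.1
    (eventually_nhdsWithin_iff.1 (hv.2 (ε / 4) (by positivity)))
  set K := (‖v‖ + ε) / r + 1
  have hKr : K * r = ‖v‖ + ε + r := by simp only [K]; field_simp
  have hK : 1 ≤ K := le_add_of_nonneg_left (by positivity)
  obtain ⟨ŷ, hŷ, hfreq⟩ := exists_frequently_isMaxOn_penalty (K := K) hΩ (mem_iInter.1 hv.1)
    (by positivity) hr (by linarith [norm_nonneg v])
    fun z hz hzq => hball (by rwa [dist_eq_norm]) hz
  set s := min r (ε / (2 * K))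
  have hŷs : ‖ŷ - q‖ < s := by
    refine lt_min (lt_of_mul_lt_mul_left (by linarith [norm_nonneg v]) (by positivity : 0 ≤ K)) ?_
    rw [lt_div_iff₀ (by positivity)]
    nlinarith [norm_nonneg (ŷ - q)]
  have hnear : ∀ᶠ y : Y × (ι → Y) in 𝓝 (ŷ, fun _ => ŷ),
      ‖y.1 - q‖ < s ∧ ∀ i, ‖y.2 i - q‖ < s := by
    refine ((continuous_fst.sub continuous_const).norm.tendsto _ |>.eventually_lt_const hŷs).and
      (eventually_all.2 fun i => ?_)
    exact (((continuous_apply i).comp continuous_snd).sub continuous_const).norm.tendsto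
      (ŷ, fun _ => ŷ) |>.eventually_lt_const hŷs
  obtain ⟨⟨y₀, w⟩, ⟨c, hc, hy, hmax⟩, h₀, hw⟩ := (hfreq.and_eventually hnear).exists
  have hsε : s ≤ ε := (min_le_right _ _).trans
    (div_le_self hε.le (by linarith))
  refine ⟨w, fun i => (2 * c) • (y₀ - w i), fun i => (hw i).le.trans hsε,
    fun i => smul_sub_mem_frechetNormalCone_of_isMaxOn hc hy hmax
      ((hw i).trans_le (min_le_left _ _)),
    ?_⟩
  rw [sum_smul_sub_eq_of_isMaxOn hy hmax (h₀.trans_le (min_le_left _ _)), sub_sub_cancel_left,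
    norm_neg, norm_smul, Real.norm_of_nonneg (by positivity)]
  calc 2 * K * ‖y₀ - q‖ ≤ 2 * K * (ε / (2 * K)) := by gcongr; exact h₀.le.trans (min_le_right _ _)
    _ = ε := by field_simp

end IntersectionRule

/-- If `μ` is bounded along a subsequence, take `t = 1`; otherwise `t = ‖μ‖⁻¹` normalises it onto
the unit sphere. -/
theorem exists_subseq_smul_tendsto_of_tendsto_sum {X : Type*} [NormedAddCommGroup X]
    [NormedSpace ℝ X] [ProperSpace X] {ι : Type*} [Fintype ι] {μ : ℕ → ι → X} {s : X}
    (hμ : Tendsto (fun k => ∑ i, μ k i) atTop (𝓝 s)) :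
    ∃ φ : ℕ → ℕ, StrictMono φ ∧ ∃ t : ℕ → ℝ, (∀ j, 0 ≤ t j) ∧ ∃ ν : ι → X,
      Tendsto (fun j => t j • μ (φ j)) atTop (𝓝 ν) ∧ (∑ i, ν i = s ∨ ν ≠ 0 ∧ ∑ i, ν i = 0) := by
  have hsum : Continuous fun ν : ι → X => ∑ i, ν i := by fun_prop
  by_cases hbdd : ∃ C, ∃ᶠ k in atTop, μ k ∈ Metric.closedBall 0 C
  · obtain ⟨C, hC⟩ := hbdd
    obtain ⟨ν, -, φ, hφ, hlim⟩ :=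
      tendsto_subseq_of_frequently_bounded Metric.isBounded_closedBall hC
    refine ⟨φ, hφ, fun _ => 1, fun _ => zero_le_one, ν, by simpa [Function.comp_def] using hlim,
      Or.inl ?_⟩
    exact tendsto_nhds_unique ((hsum.tendsto ν).comp hlim) (hμ.comp hφ.tendsto_atTop)
  · push Not at hbdd
    have hnorm : Tendsto (fun k => ‖μ k‖) atTop atTop :=
      tendsto_atTop.2 fun C => (hbdd C).mono fun k hk => by
        simp only [Metric.mem_closedBall, dist_zero_right, not_le] at hk; exact hk.le
    have hsphere : ∀ᶠ k in atTop, ‖μ k‖⁻¹ • μ k ∈ Metric.sphere (0 : ι → X) 1 := by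
      filter_upwards [hnorm.eventually_gt_atTop 0] with k hk
      simp [norm_smul, hk.ne']
    obtain ⟨ν, hν, φ, hφ, hlim⟩ := (isCompact_sphere _ _).tendsto_subseq' hsphere.frequently
    refine ⟨φ, hφ, fun j => ‖μ (φ j)‖⁻¹, fun j => by positivity, ν, hlim,
      Or.inr ⟨ne_zero_of_mem_unit_sphere ⟨ν, hν⟩, ?_⟩⟩
    have hscaled : Tendsto (fun j => ‖μ (φ j)‖⁻¹ • ∑ i, μ (φ j) i) atTop (𝓝 ((0 : ℝ) • s)) :=
      (tendsto_inv_atTop_zero.comp (hnorm.comp hφ.tendsto_atTop)).smul (hμ.comp hφ.tendsto_atTop)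
    rw [zero_smul] at hscaled
    refine tendsto_nhds_unique ((hsum.tendsto ν).comp hlim) ?_
    simpa [Function.comp_def, Finset.smul_sum] using hscaled

theorem WithLp.fst_sum {p : ENNReal} {α β ι : Type*} [AddCommGroup α] [AddCommGroup β]
    (s : Finset ι) (ν : ι → WithLp p (α × β)) : (∑ i ∈ s, ν i).fst = ∑ i ∈ s, (ν i).fst :=
  map_sum (WithLp.fstₗ p ℕ α β) ν s

theorem WithLp.snd_sum {p : ENNReal} {α β ι : Type*} [AddCommGroup α] [AddCommGroup β]
    (s : Finset ι) (ν : ι → WithLp p (α × β)) : (∑ i ∈ s, ν i).snd = ∑ i ∈ s, (ν i).snd :=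
  map_sum (WithLp.sndₗ p ℕ α β) ν s

theorem tendsto_norm_atTop_of_norm_sub_le {α X : Type*} [SeminormedAddCommGroup X] {l : Filter α}
    {a b : α → X} {C : ℝ} (h : ∀ k, ‖a k - b k‖ ≤ C) (hb : Tendsto (fun k => ‖b k‖) l atTop) :
    Tendsto (fun k => ‖a k‖) l atTop := by
  refine tendsto_atTop_mono (fun k => ?_) (tendsto_atTop_add_const_right _ (-C) hb)
  have := norm_sub_norm_le (b k) (a k)
  rw [norm_sub_rev] at this
  linarith [h k]

section Epigraph

variable {E : Type*} {f : E → EReal} {p : WithLp 2 (E × ℝ)}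

@[simp] theorem mkP_fst (x : E) (t : ℝ) : (mkP x t).fst = x := rfl

@[simp] theorem mkP_snd (x : E) (t : ℝ) : (mkP x t).snd = t := rfl

theorem mem_epiSet : p ∈ epiSet f ↔ f p.fst ≤ p.snd := Iff.rfl

theorem epiSet_iSup {ι : Type*} (f : ι → E → EReal) :
    epiSet (fun x => ⨆ i, f i x) = ⋂ i, epiSet (f i) := by
  ext p
  simp only [mem_epiSet, mem_iInter]
  exact iSup_le_iff

variable [NormedAddCommGroup E]

@[simp] theorem mkP_zero : mkP (0 : E) 0 = 0 := rfl

theorem mkP_add (x y : E) (s t : ℝ) : mkP x s + mkP y t = mkP (x + y) (s + t) := rfl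

theorem isClosed_epiSet (hf : LowerSemicontinuous f) : IsClosed (epiSet f) :=
  hf.isClosed_epigraph.preimage
    ((WithLp.continuous_fst 2 E ℝ).prodMk
      (continuous_coe_real_ereal.comp (WithLp.continuous_snd 2 E ℝ)))

theorem add_mkP_zero_mem_epiSet (hp : p ∈ epiSet f) {c : ℝ} (hc : 0 ≤ c) :
    p + mkP 0 c ∈ epiSet f := by
  rw [mem_epiSet, WithLp.add_fst, WithLp.add_snd, mkP_fst, mkP_snd, add_zero]
  exact hp.trans (EReal.coe_le_coe_iff.2 (le_add_of_nonneg_right hc))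

variable [InnerProductSpace ℝ E] {v : WithLp 2 (E × ℝ)}

theorem snd_nonpos_of_mem_frechetNormalCone_epiSet (hv : v ∈ FrechetNormalCone (epiSet f) p) :
    v.snd ≤ 0 := by
  refine le_of_forall_pos_le_add fun ε hε => ?_
  have hray : Tendsto (fun t : ℝ => p + mkP 0 t) (𝓝[>] 0) (𝓝[epiSet f] p) := by
    refine tendsto_nhdsWithin_iff.2 ⟨?_, eventually_nhdsWithin_of_forall fun t ht =>
      add_mkP_zero_mem_epiSet hv.1 (le_of_lt ht)⟩
    have hcont : Continuous fun t : ℝ => p + mkP (0 : E) t := continuous_const.add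
      ((WithLp.prod_continuous_toLp 2 E ℝ).comp (continuous_const.prodMk continuous_id) :)
    simpa using tendsto_nhdsWithin_of_tendsto_nhds (hcont.tendsto 0)
  obtain ⟨t, hle, ht⟩ := ((hray.eventually (hv.2 ε hε)).and self_mem_nhdsWithin).exists
  have hinner : ⟪v, mkP (0 : E) t⟫ = v.snd * t := by simp [WithLp.prod_inner_apply, mul_comm]
  have hnorm : ‖mkP (0 : E) t‖ = t := by
    rw [show mkP (0 : E) t = WithLp.toLp 2 ((0 : E), t) from rfl, WithLp.norm_toLp_snd,
      Real.norm_of_nonneg (le_of_lt ht)]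
  rw [add_sub_cancel_left, hinner, hnorm] at hle
  rw [zero_add]
  exact le_of_mul_le_mul_right hle ht

theorem mem_frechetNormalCone_epiSet_graph {x : E} {t : ℝ} (hfx : f x ≠ ⊤) (hfb : f x ≠ ⊥)
    (hv : v ∈ FrechetNormalCone (epiSet f) (mkP x t)) :
    v ∈ FrechetNormalCone (epiSet f) (mkP x (f x).toReal) := by
  have hcoe : ((f x).toReal : EReal) = f x := EReal.coe_toReal hfx hfb
  have hle : (f x).toReal ≤ t := by
    have := hv.1
    rwa [mem_epiSet, mkP_fst, mkP_snd, ← hcoe, EReal.coe_le_coe_iff] at this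
  refine mem_frechetNormalCone_of_add_mem (a := mkP 0 (t - (f x).toReal))
    (by rw [mem_epiSet, mkP_fst, mkP_snd, hcoe]) (fun y hy => add_mkP_zero_mem_epiSet hy
      (sub_nonneg.2 hle)) ?_
  rwa [mkP_add, add_zero, add_sub_cancel]

end Epigraph

section HorizonNormals

variable {E : Type*} [NormedAddCommGroup E] [InnerProductSpace ℝ E] {f : E → EReal}

/-- A variant of `𝒩(f)` (compare `mkP_mem_epiHorizonNormals` and
`mem_nclAtInfty_of_mkP_mem_epiHorizonNormals`) built from Fréchet normals at arbitrary points of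
`epi f`, which is the form in which the fuzzy intersection rule produces normals. -/
def epiHorizonNormals (f : E → EReal) : Set (WithLp 2 (E × ℝ)) :=
  {ν | ∃ p v : ℕ → WithLp 2 (E × ℝ), (∀ k, v k ∈ FrechetNormalCone (epiSet f) (p k)) ∧
    Tendsto (fun k => ‖(p k).fst‖) atTop atTop ∧ Tendsto v atTop (𝓝 ν)}

theorem mem_epiHorizonNormals_of_tendsto_smul {p v : ℕ → WithLp 2 (E × ℝ)}
    (hv : ∀ k, v k ∈ FrechetNormalCone (epiSet f) (p k))
    (hp : Tendsto (fun k => ‖(p k).fst‖) atTop atTop) {φ : ℕ → ℕ} (hφ : Tendsto φ atTop atTop)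
    {t : ℕ → ℝ} (ht : ∀ j, 0 ≤ t j) {ν : WithLp 2 (E × ℝ)}
    (hν : Tendsto (fun j => t j • v (φ j)) atTop (𝓝 ν)) : ν ∈ epiHorizonNormals f :=
  ⟨fun j => p (φ j), fun j => t j • v (φ j), fun j => smul_mem_frechetNormalCone (ht j) (hv _),
    hp.comp hφ, hν⟩

theorem smul_mem_epiHorizonNormals {c : ℝ} (hc : 0 ≤ c) {ν : WithLp 2 (E × ℝ)}
    (hν : ν ∈ epiHorizonNormals f) : c • ν ∈ epiHorizonNormals f := by
  obtain ⟨p, v, hv, hp, hlim⟩ := hν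
  exact mem_epiHorizonNormals_of_tendsto_smul hv hp tendsto_id (fun _ => hc) (hlim.const_smul c)

theorem snd_nonpos_of_mem_epiHorizonNormals {ν : WithLp 2 (E × ℝ)}
    (hν : ν ∈ epiHorizonNormals f) : ν.snd ≤ 0 := by
  obtain ⟨p, v, hv, -, hlim⟩ := hν
  exact le_of_tendsto' ((WithLp.continuous_snd 2 E ℝ).tendsto ν |>.comp hlim)
    fun k => snd_nonpos_of_mem_frechetNormalCone_epiSet (hv k)

theorem mkP_mem_epiHorizonNormals {u : E} {s : ℝ} (h : (u, s) ∈ NclAtInfty f) :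
    mkP u s ∈ epiHorizonNormals f := by
  obtain ⟨xs, ws, -, hxs, hws, hlim⟩ := h
  have hdiag : ∀ k : ℕ, ∃ p v, v ∈ FrechetNormalCone (epiSet f) p ∧
      dist p (mkP (xs k) (f (xs k)).toReal) < 1 / (k + 1) ∧ dist v (ws k) < 1 / (k + 1) := by
    intro k
    obtain ⟨ys, vs, hfre, hys, hvs⟩ := hws k
    obtain ⟨j, hj₁, hj₂⟩ := ((Metric.tendsto_nhds.1 hys _ Nat.one_div_pos_of_nat).and
      (Metric.tendsto_nhds.1 hvs _ Nat.one_div_pos_of_nat)).exists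
    exact ⟨ys j, vs j, hfre j, hj₁, hj₂⟩
  choose p v hv hp hvw using hdiag
  refine ⟨p, v, hv, tendsto_norm_atTop_of_norm_sub_le (C := 1) (fun k => ?_) hxs, ?_⟩
  · calc ‖(p k).fst - xs k‖ ≤ ‖p k - mkP (xs k) (f (xs k)).toReal‖ :=
          WithLp.norm_fst_le E (p k - mkP (xs k) (f (xs k)).toReal)
      _ ≤ 1 := by
        rw [← dist_eq_norm]
        exact (hp k).le.trans
          (div_le_one_of_le₀ (by linarith [k.cast_nonneg (α := ℝ)]) (by positivity))
  · have hws' : Tendsto ws atTop (𝓝 (mkP u s)) :=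
      (WithLp.prod_continuous_toLp 2 E ℝ).tendsto (u, s) |>.comp hlim
    exact hws'.congr_dist (squeeze_zero (fun _ => dist_nonneg)
      (fun k => by rw [dist_comm]; exact (hvw k).le) tendsto_one_div_add_atTop_nhds_zero_nat)

theorem mem_nclAtInfty_of_mkP_mem_epiHorizonNormals (hbot : ∀ x, f x ≠ ⊥) {u : E} {s : ℝ}
    (h : mkP u s ∈ epiHorizonNormals f) : (u, s) ∈ NclAtInfty f := by
  obtain ⟨p, v, hv, hp, hlim⟩ := h
  have htop : ∀ k, f (p k).fst ≠ ⊤ := fun k => ne_top_of_le_ne_top (EReal.coe_ne_top _) (hv k).1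
  refine ⟨fun k => (p k).fst, v, htop, hp, fun k => frechetNormalCone_subset_limitingNormalCone
    (mem_frechetNormalCone_epiSet_graph (t := (p k).snd) (htop k) (hbot _) (hv k)), ?_⟩
  exact (WithLp.prod_continuous_ofLp 2 E ℝ).tendsto _ |>.comp hlim

end HorizonNormals

section MaxRule

variable {E : Type*} [NormedAddCommGroup E] [InnerProductSpace ℝ E] {ι : Type*} [Fintype ι]
  {f : ι → E → EReal}

theorem exists_sum_eq_of_mem_epiHorizonNormals_iSup [FiniteDimensional ℝ E]
    (hf : ∀ i, LowerSemicontinuous (f i))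
    (hqual : ∀ ν : ι → WithLp 2 (E × ℝ), (∀ i, ν i ∈ epiHorizonNormals (f i)) →
      ∑ i, ν i = 0 → ν = 0)
    {ν : WithLp 2 (E × ℝ)} (hν : ν ∈ epiHorizonNormals fun x => ⨆ i, f i x) :
    ∃ μ : ι → WithLp 2 (E × ℝ), (∀ i, μ i ∈ epiHorizonNormals (f i)) ∧ ∑ i, μ i = ν := by
  obtain ⟨p, v, hv, hp, hlim⟩ := hν
  simp only [epiSet_iSup] at hv
  choose y μ hy hμ hsum using fun k : ℕ => exists_sum_mem_frechetNormalCone_near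
    (fun i => isClosed_epiSet (hf i)) (hv k) (Nat.one_div_pos_of_nat (n := k))
  have hy_inf : ∀ i, Tendsto (fun k => ‖(y k i).fst‖) atTop atTop := fun i =>
    tendsto_norm_atTop_of_norm_sub_le (C := 1) (fun k => (WithLp.norm_fst_le E (y k i - p k)).trans
      ((hy k i).trans (div_le_one_of_le₀ (by linarith [k.cast_nonneg (α := ℝ)]) (by positivity))))
      hp
  have hsum_lim : Tendsto (fun k => ∑ i, μ k i) atTop (𝓝 ν) :=
    hlim.congr_dist (squeeze_zero (fun _ => dist_nonneg)
      (fun k => by rw [dist_comm, dist_eq_norm]; exact hsum k)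
      tendsto_one_div_add_atTop_nhds_zero_nat)
  obtain ⟨φ, hφ, t, ht, ν', hν'lim, hν'⟩ := exists_subseq_smul_tendsto_of_tendsto_sum hsum_lim
  have hmem : ∀ i, ν' i ∈ epiHorizonNormals (f i) := fun i =>
    mem_epiHorizonNormals_of_tendsto_smul (fun k => hμ k i) (hy_inf i) hφ.tendsto_atTop ht
      ((continuous_apply i).tendsto _ |>.comp hν'lim)
  rcases hν' with hsum | ⟨hne, hzero⟩
  · exact ⟨ν', hmem, hsum⟩
  · exact absurd (hqual ν' hmem hzero) hne

theorem mem_singSubInfty_of_mem_epiHorizonNormals {g : E → EReal} (hbot : ∀ x, g x ≠ ⊥)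
    {ν : WithLp 2 (E × ℝ)} (hν : ν ∈ epiHorizonNormals g) (h0 : ν.snd = 0) :
    ν.fst ∈ singSubInfty g := by
  refine mem_nclAtInfty_of_mkP_mem_epiHorizonNormals hbot ?_
  rwa [← h0]

theorem mem_lamCirc_of_mem_epiHorizonNormals {g : E → EReal} (hbot : ∀ x, g x ≠ ⊥)
    {ν : WithLp 2 (E × ℝ)} (hν : ν ∈ epiHorizonNormals g) : ν.fst ∈ lamCirc g (-ν.snd) := by
  rcases (snd_nonpos_of_mem_epiHorizonNormals hν).eq_or_lt with h0 | hneg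
  · rw [lamCirc, if_pos (neg_eq_zero.2 h0)]
    exact mem_singSubInfty_of_mem_epiHorizonNormals hbot hν h0
  · rw [lamCirc, if_neg (neg_ne_zero.2 hneg.ne)]
    have hc : 0 < (-ν.snd)⁻¹ := inv_pos.2 (neg_pos.2 hneg)
    have hscaled := mem_nclAtInfty_of_mkP_mem_epiHorizonNormals hbot
      (smul_mem_epiHorizonNormals hc.le hν)
    refine ⟨(-ν.snd)⁻¹ • ν.fst, ?_, smul_inv_smul₀ (neg_ne_zero.2 hneg.ne) _⟩
    simpa [subInfty, inv_mul_cancel₀ hneg.ne] using hscaled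

theorem eq_zero_of_mem_epiHorizonNormals_of_sum_eq_zero (hbot : ∀ i x, f i x ≠ ⊥)
    (hQC : ∀ u : ι → E, (∀ i, u i ∈ singSubInfty (f i)) → ∑ i, u i = 0 → ∀ i, u i = 0)
    {ν : ι → WithLp 2 (E × ℝ)} (hν : ∀ i, ν i ∈ epiHorizonNormals (f i)) (hsum : ∑ i, ν i = 0) :
    ν = 0 := by
  have hsnd : ∀ i, (ν i).snd = 0 := fun i =>
    (Finset.sum_eq_zero_iff_of_nonpos fun i _ => snd_nonpos_of_mem_epiHorizonNormals (hν i)).1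
      (by rw [← WithLp.snd_sum, hsum]; rfl) i (Finset.mem_univ i)
  have hfst := hQC _ (fun i => mem_singSubInfty_of_mem_epiHorizonNormals (hbot i) (hν i) (hsnd i))
    (by rw [← WithLp.fst_sum, hsum]; rfl)
  funext i
  rw [show ν i = mkP (ν i).fst (ν i).snd from rfl, hfst i, hsnd i]
  rfl

theorem exists_sum_eq_of_mem_nclAtInfty_iSup [FiniteDimensional ℝ E]
    (hf : ∀ i, LowerSemicontinuous (f i)) (hbot : ∀ i x, f i x ≠ ⊥)
    (hQC : ∀ u : ι → E, (∀ i, u i ∈ singSubInfty (f i)) → ∑ i, u i = 0 → ∀ i, u i = 0)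
    {w : E} {s : ℝ} (hws : (w, s) ∈ NclAtInfty fun x => ⨆ i, f i x) :
    ∃ μ : ι → WithLp 2 (E × ℝ), (∀ i, μ i ∈ epiHorizonNormals (f i)) ∧
      ∑ i, (μ i).fst = w ∧ ∑ i, (μ i).snd = s := by
  obtain ⟨μ, hμ, hsum⟩ := exists_sum_eq_of_mem_epiHorizonNormals_iSup hf
    (fun _ => eq_zero_of_mem_epiHorizonNormals_of_sum_eq_zero hbot hQC)
    (mkP_mem_epiHorizonNormals hws)
  exact ⟨μ, hμ, by rw [← WithLp.fst_sum, hsum]; rfl, by rw [← WithLp.snd_sum, hsum]; rfl⟩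

end MaxRule

theorem max_rule_at_infinity_general {n m : ℕ}
    (f : Fin m → EuclideanSpace ℝ (Fin n) → EReal)
    (hlsc : ∀ i, LowerSemicontinuous (f i)) (hbot : ∀ i x, f i x ≠ ⊥)
    (hQC : ∀ u : Fin m → EuclideanSpace ℝ (Fin n),
      (∀ i, u i ∈ singSubInfty (f i)) → (∑ i, u i) = 0 → ∀ i, u i = 0) :
    subInfty (fun x => ⨆ i, f i x) ⊆
      {w | ∃ lam : Fin m → ℝ, (∀ i, 0 ≤ lam i) ∧ (∑ i, lam i) = 1 ∧
        w ∈ ∑ i, lamCirc (f i) (lam i)} ∧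
    singSubInfty (fun x => ⨆ i, f i x) ⊆ ∑ i, singSubInfty (f i) := by
  refine ⟨fun w hw => ?_, fun w hw => ?_⟩
  · obtain ⟨μ, hμ, rfl, hsnd⟩ := exists_sum_eq_of_mem_nclAtInfty_iSup hlsc hbot hQC hw
    refine ⟨fun i => -(μ i).snd, fun i => neg_nonneg.2 (snd_nonpos_of_mem_epiHorizonNormals (hμ i)),
      by rw [Finset.sum_neg_distrib, hsnd, neg_neg], ?_⟩
    exact Set.finsetSum_mem_finsetSum _ _ _ fun i _ =>
      mem_lamCirc_of_mem_epiHorizonNormals (hbot i) (hμ i)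
  · obtain ⟨μ, hμ, rfl, hsnd⟩ := exists_sum_eq_of_mem_nclAtInfty_iSup hlsc hbot hQC hw
    have h0 := (Finset.sum_eq_zero_iff_of_nonpos fun i _ =>
      snd_nonpos_of_mem_epiHorizonNormals (hμ i)).1 hsnd
    exact Set.finsetSum_mem_finsetSum _ _ _ fun i _ =>
      mem_singSubInfty_of_mem_epiHorizonNormals (hbot i) (hμ i) (h0 i (Finset.mem_univ i))

/-- Proposition 2.14: maximum rule for the limiting and singular
subdifferentials at infinity. -/
theorem max_rule_at_infinity {n m : ℕ} (hm : 2 ≤ m)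
    (f : Fin m → EuclideanSpace ℝ (Fin n) → EReal)
    (hlsc : ∀ i, LowerSemicontinuous (f i)) (hbot : ∀ i x, f i x ≠ ⊥)
    (hdom : ∀ i, ¬ Bornology.IsBounded {x | f i x ≠ ⊤})
    (hdommax : ¬ Bornology.IsBounded {x | (⨆ i, f i x) ≠ ⊤})
    (hQC : ∀ u : Fin m → EuclideanSpace ℝ (Fin n),
      (∀ i, u i ∈ singSubInfty (f i)) → (∑ i, u i) = 0 → ∀ i, u i = 0) :
    subInfty (fun x => ⨆ i, f i x) ⊆
      {w | ∃ lam : Fin m → ℝ, (∀ i, 0 ≤ lam i) ∧ (∑ i, lam i) = 1 ∧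
        w ∈ ∑ i, lamCirc (f i) (lam i)} ∧
    singSubInfty (fun x => ⨆ i, f i x) ⊆ ∑ i, singSubInfty (f i) :=
  max_rule_at_infinity_general f hlsc hbot hQC
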